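/- arXiv:0909.2198 — 5 statements merged into one kernel-verified Lean document; each statement's English description precedes it below -/
import Mathlib

section
/- Let λ ∈ P⁺, i ∈ I, and w ∈ W with ℓ(s_i w) = ℓ(w) + 1. Then wλ + α_i does not belong to P(λ) = { vμ : v ∈ W, μ ∈ P⁺, μ ≤ λ }. -/
/-- The simple reflection `s_i` on the weight lattice `P = I → ℤ` (fundamental-weight
coordinates), for a Cartan matrix `C`: `(s_i λ)(h_j) = λ(h_j) − λ(h_i)·C j i`. -/
def sref (n : ℕ) (C : Fin n → Fin n → ℤ) (i : Fin n) (l : Fin n → ℤ) : Fin n → ℤ :=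
  fun j => l j - l i * C j i

/-- The simple reflection as a permutation of the weight lattice. -/
def srefPerm (n : ℕ) (C : Fin n → Fin n → ℤ) (hC : ∀ i, C i i = 2) (i : Fin n) :
    Equiv.Perm (Fin n → ℤ) :=
  Function.Involutive.toPerm (sref n C i) (by
    intro l
    funext j
    simp only [sref, hC]
    ring)

/-- The Weyl group, as the subgroup generated by the simple reflections. -/
def weylGroup (n : ℕ) (C : Fin n → Fin n → ℤ) (hC : ∀ i, C i i = 2) :
    Subgroup (Equiv.Perm (Fin n → ℤ)) :=
  Subgroup.closure (Set.range (srefPerm n C hC))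

/-- The simple root `α_i`, written in fundamental-weight coordinates: `α_i(h_j) = C j i`. -/
def alphaRoot (n : ℕ) (C : Fin n → Fin n → ℤ) (i : Fin n) : Fin n → ℤ := fun j => C j i

/-- The positive root cone `Q⁺` of non-negative integer combinations of simple roots. -/
def QPos (n : ℕ) (C : Fin n → Fin n → ℤ) : Set (Fin n → ℤ) :=
  { v | ∃ c : Fin n → ℕ, v = ∑ i, (c i : ℤ) • alphaRoot n C i }

/-- The partial order on `P`: `μ ≤ λ` iff `λ − μ ∈ Q⁺`. -/
def leQ (n : ℕ) (C : Fin n → Fin n → ℤ) (μ l : Fin n → ℤ) : Prop := l - μ ∈ QPos n C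

/-- The length of an element of the Weyl group: the least number of simple reflections
needed to express it. -/
noncomputable def wlen (n : ℕ) (C : Fin n → Fin n → ℤ) (hC : ∀ i, C i i = 2)
    (w : Equiv.Perm (Fin n → ℤ)) : ℕ :=
  sInf { m | ∃ f : Fin m → Fin n,
    w = (List.ofFn fun k => srefPerm n C hC (f k)).prod }

/-- The set `P(λ) = { vμ : v ∈ W, μ ∈ P⁺, μ ≤ λ }`. -/
def weightPSet (n : ℕ) (C : Fin n → Fin n → ℤ) (hC : ∀ i, C i i = 2) (lam : Fin n → ℤ) :
    Set (Fin n → ℤ) :=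
  { v | ∃ w ∈ weylGroup n C hC, ∃ mu : Fin n → ℤ,
      (∀ i, 0 ≤ mu i) ∧ leQ n C mu lam ∧ v = w mu }

/-!
Averaging the dot product over the finite group `W` gives a `W`-invariant form `B` with
`2 B(α_k, y) = B(α_k, α_k) y_k` and `B(α_k, α_k) > 0`. Hence `B(μ, μ) ≤ B(λ, λ)` for dominant
`μ ≤ λ`, while `B(wλ + α_i, wλ + α_i) = B(λ, λ) + B(α_i, α_i) ((wλ)_i + 1)`; so `wλ + α_i ∈ W μ`
forces `(wλ)_i < 0`. But `ℓ(w) < ℓ(s_i w)` gives `(wλ)_i ≥ 0`. For strictly dominant weights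
this is proved by induction on `ℓ(w)`: write `w = (s_j s_i s_j ⋯) v` with the alternating factor
as long as possible, so that `v` has no descent in `{i, j}`, and settle the rank-two case by
hand, through the braid relation when `C i j * C j i ≤ 3` and an explicit invariant cone when
`C i j * C j i ≥ 4`.
-/

namespace CartanWeyl

variable {n : ℕ} {C : Fin n → Fin n → ℤ} {hC : ∀ i, C i i = 2}

@[simp]
lemma srefPerm_apply (i : Fin n) (x : Fin n → ℤ) (j : Fin n) :
    srefPerm n C hC i x j = x j - x i * C j i := rfl

@[simp]
lemma srefPerm_mul_self (i : Fin n) : srefPerm n C hC i * srefPerm n C hC i = 1 := by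
  ext x j
  simp only [Equiv.Perm.mul_apply, srefPerm_apply, hC, Equiv.Perm.one_apply]
  ring

lemma srefPerm_mem (i : Fin n) : srefPerm n C hC i ∈ weylGroup n C hC :=
  Subgroup.subset_closure ⟨i, rfl⟩

lemma srefPerm_mul_cancel_left (i : Fin n) (v : Equiv.Perm (Fin n → ℤ)) :
    srefPerm n C hC i * (srefPerm n C hC i * v) = v := by
  rw [← mul_assoc, srefPerm_mul_self, one_mul]

variable (hC) in
def wordProd (l : List (Fin n)) : Equiv.Perm (Fin n → ℤ) := (l.map (srefPerm n C hC)).prod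

@[simp]
lemma wordProd_nil : wordProd hC [] = 1 := rfl

@[simp]
lemma wordProd_cons (i : Fin n) (l : List (Fin n)) :
    wordProd hC (i :: l) = srefPerm n C hC i * wordProd hC l := by
  simp [wordProd]

@[simp]
lemma wordProd_append (l₁ l₂ : List (Fin n)) :
    wordProd hC (l₁ ++ l₂) = wordProd hC l₁ * wordProd hC l₂ := by
  simp [wordProd]

lemma wordProd_mem (l : List (Fin n)) : wordProd hC l ∈ weylGroup n C hC := by
  induction l with
  | nil => exact one_mem _
  | cons i l ih => simpa using mul_mem (srefPerm_mem i) ih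

@[simp]
lemma inv_srefPerm (i : Fin n) : (srefPerm n C hC i)⁻¹ = srefPerm n C hC i :=
  inv_eq_of_mul_eq_one_right (srefPerm_mul_self i)

lemma inv_wordProd (l : List (Fin n)) : (wordProd hC l)⁻¹ = wordProd hC l.reverse := by
  induction l with
  | nil => simp
  | cons i l ih => simp [ih]

lemma exists_wordProd_eq {w : Equiv.Perm (Fin n → ℤ)} (hw : w ∈ weylGroup n C hC) :
    ∃ l, w = wordProd hC l := by
  induction hw using Subgroup.closure_induction with
  | mem x hx =>
    obtain ⟨i, rfl⟩ := hx
    exact ⟨[i], by simp⟩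
  | one => exact ⟨[], rfl⟩
  | mul x y _ _ hx hy =>
    obtain ⟨l₁, rfl⟩ := hx
    obtain ⟨l₂, rfl⟩ := hy
    exact ⟨l₁ ++ l₂, by simp⟩
  | inv x _ hx =>
    obtain ⟨l, rfl⟩ := hx
    exact ⟨l.reverse, inv_wordProd l⟩

lemma wlen_eq_sInf (w : Equiv.Perm (Fin n → ℤ)) :
    wlen n C hC w = sInf {m | ∃ l : List (Fin n), l.length = m ∧ w = wordProd hC l} := by
  rw [wlen]
  congr 1
  ext m
  constructor
  · rintro ⟨f, rfl⟩
    exact ⟨List.ofFn f, by simp, by simp only [wordProd, List.map_ofFn]; rfl⟩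
  · rintro ⟨l, rfl, rfl⟩
    exact ⟨l.get, by simp [wordProd]⟩

lemma wlen_le_length {w : Equiv.Perm (Fin n → ℤ)} {l : List (Fin n)} (h : w = wordProd hC l) :
    wlen n C hC w ≤ l.length := by
  rw [wlen_eq_sInf]
  exact Nat.sInf_le ⟨l, rfl, h⟩

lemma exists_reduced_word {w : Equiv.Perm (Fin n → ℤ)} (hw : w ∈ weylGroup n C hC) :
    ∃ l, l.length = wlen n C hC w ∧ w = wordProd hC l := by
  obtain ⟨l, hl⟩ := exists_wordProd_eq hw
  rw [wlen_eq_sInf]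
  exact Nat.sInf_mem (s := {m | ∃ l : List (Fin n), l.length = m ∧ w = wordProd hC l})
    ⟨l.length, l, rfl, hl⟩

lemma wlen_wordProd_mul_le (l : List (Fin n)) {v : Equiv.Perm (Fin n → ℤ)}
    (hv : v ∈ weylGroup n C hC) :
    wlen n C hC (wordProd hC l * v) ≤ l.length + wlen n C hC v := by
  obtain ⟨lv, hlv, rfl⟩ := exists_reduced_word hv
  simpa [hlv] using wlen_le_length (wordProd_append l lv).symm

lemma wlen_srefPerm_mul_le (i : Fin n) {v : Equiv.Perm (Fin n → ℤ)}
    (hv : v ∈ weylGroup n C hC) :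
    wlen n C hC (srefPerm n C hC i * v) ≤ wlen n C hC v + 1 := by
  simpa [add_comm] using wlen_wordProd_mul_le [i] hv

lemma eq_one_or_exists_wlen_srefPerm_mul_lt {w : Equiv.Perm (Fin n → ℤ)}
    (hw : w ∈ weylGroup n C hC) :
    w = 1 ∨ ∃ j, wlen n C hC (srefPerm n C hC j * w) < wlen n C hC w := by
  obtain ⟨_ | ⟨j, l⟩, hl, rfl⟩ := exists_reduced_word hw
  · exact Or.inl rfl
  · refine Or.inr ⟨j, ?_⟩
    rw [← hl, wordProd_cons, srefPerm_mul_cancel_left]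
    exact (wlen_le_length rfl).trans_lt (by simp)

lemma map_add_of_mem {w : Equiv.Perm (Fin n → ℤ)} (hw : w ∈ weylGroup n C hC)
    (x y : Fin n → ℤ) : w (x + y) = w x + w y := by
  obtain ⟨l, rfl⟩ := exists_wordProd_eq hw
  induction l with
  | nil => rfl
  | cons i l ih =>
    ext j
    simp only [wordProd_cons, Equiv.Perm.mul_apply, ih (wordProd_mem l), srefPerm_apply,
      Pi.add_apply]
    ring

def weylLin {w : Equiv.Perm (Fin n → ℤ)} (hw : w ∈ weylGroup n C hC) :
    (Fin n → ℤ) →ₗ[ℤ] (Fin n → ℤ) :=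
  (AddMonoidHom.mk' w (map_add_of_mem hw)).toIntLinearMap

@[simp]
lemma weylLin_apply {w : Equiv.Perm (Fin n → ℤ)} (hw : w ∈ weylGroup n C hC) (x : Fin n → ℤ) :
    weylLin hw x = w x := rfl

lemma map_zsmul_of_mem {w : Equiv.Perm (Fin n → ℤ)} (hw : w ∈ weylGroup n C hC)
    (c : ℤ) (x : Fin n → ℤ) : w (c • x) = c • w x :=
  (weylLin hw).map_smul c x

def alt : Fin n → Fin n → ℕ → List (Fin n)
  | _, _, 0 => []
  | i, j, k + 1 => i :: alt j i k

def altLetter (i j : Fin n) (k : ℕ) : Fin n := if k % 2 = 0 then i else j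

@[simp]
lemma length_alt (i j : Fin n) (k : ℕ) : (alt i j k).length = k := by
  induction k generalizing i j with
  | zero => rfl
  | succ k ih => simp [alt, ih]

lemma altLetter_succ (i j : Fin n) (k : ℕ) : altLetter i j (k + 1) = altLetter j i k := by
  simp only [altLetter]
  split_ifs <;> first | rfl | omega

lemma altLetter_cases (i j : Fin n) (k : ℕ) :
    altLetter i j k = i ∧ altLetter i j (k + 1) = j ∨
      altLetter i j k = j ∧ altLetter i j (k + 1) = i := by
  simp only [altLetter]
  rcases Nat.mod_two_eq_zero_or_one k with h | h <;> simp [h, Nat.add_mod]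

lemma alt_add (i j : Fin n) (p q : ℕ) :
    alt i j (p + q) = alt i j p ++ alt (altLetter i j p) (altLetter j i p) q := by
  induction p generalizing i j with
  | zero => simp [alt, altLetter]
  | succ p ih =>
    rw [Nat.add_right_comm, alt, ih, altLetter_succ, altLetter_succ]
    rfl

lemma alt_succ (i j : Fin n) (k : ℕ) : alt i j (k + 1) = alt i j k ++ [altLetter i j k] := by
  simpa [alt] using alt_add i j k 1

lemma exists_short_word_of_braid {i j : Fin n} {M k : ℕ}
    (hbr : wordProd hC (alt i j M) = wordProd hC (alt j i M)) (hM : 1 ≤ M) (hMk : M < k + 2) :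
    ∃ l : List (Fin n), l.length = k ∧ wordProd hC (alt i j (k + 2)) = wordProd hC l := by
  obtain ⟨M, rfl⟩ : ∃ M', M = M' + 1 := ⟨M - 1, by omega⟩
  obtain ⟨r, hr⟩ : ∃ r, k + 2 = M + 1 + (r + 1) := ⟨k - M, by omega⟩
  refine ⟨alt j i M ++ alt (altLetter j i (M + 1)) (altLetter i j (M + 1)) r, by simp; omega, ?_⟩
  rw [hr, alt_add, wordProd_append, hbr, alt_succ, alt, altLetter_succ i j M]
  simp [mul_assoc, srefPerm_mul_cancel_left]

lemma exists_maximal_alt_mul {w v : Equiv.Perm (Fin n → ℤ)} (hv : v ∈ weylGroup n C hC)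
    {i j : Fin n} {k : ℕ} (hwv : w = wordProd hC (alt j i (k + 1)) * v)
    (hwl : wlen n C hC w = k + 1 + wlen n C hC v) :
    ∃ k v, v ∈ weylGroup n C hC ∧ w = wordProd hC (alt j i (k + 1)) * v ∧
      wlen n C hC w = k + 1 + wlen n C hC v ∧
      wlen n C hC v ≤ wlen n C hC (srefPerm n C hC i * v) ∧
      wlen n C hC v ≤ wlen n C hC (srefPerm n C hC j * v) := by
  induction h : wlen n C hC v using Nat.strong_induction_on generalizing k v with
  | _ d ih =>
  have hmem (t : Fin n) := mul_mem (srefPerm_mem (hC := hC) t) hv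
  by_cases hdesc : wlen n C hC (srefPerm n C hC (altLetter j i (k + 1)) * v) < d
  · have := wlen_srefPerm_mul_le (altLetter j i (k + 1)) (hmem (altLetter j i (k + 1)))
    rw [srefPerm_mul_cancel_left] at this
    refine ih _ hdesc (k := k + 1) (hmem _) ?_ (by omega) rfl
    rw [hwv, alt_succ j i (k + 1)]
    simp [mul_assoc, srefPerm_mul_cancel_left]
  · -- The other letter of `{i, j}` is the last one of the alternating factor, and lengths add up.
    have hlast : wlen n C hC w ≤ k + wlen n C hC (srefPerm n C hC (altLetter j i k) * v) := by
      have hwv' : w = wordProd hC (alt j i k) * (srefPerm n C hC (altLetter j i k) * v) := by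
        rw [hwv, alt_succ]
        simp [mul_assoc]
      simpa [hwv'] using wlen_wordProd_mul_le (alt j i k) (hmem (altLetter j i k))
    rcases altLetter_cases j i k with ⟨hk, hk'⟩ | ⟨hk, hk'⟩ <;> rw [hk] at hlast <;>
      rw [hk'] at hdesc <;> exact ⟨k, v, hv, hwv, by omega, by omega, by omega⟩

lemma int_pair_cases {a b : ℤ} (ha : a ≤ 0) (hb : b ≤ 0) (hab : a = 0 ↔ b = 0) :
    (a < 0 ∧ b < 0 ∧ 4 ≤ a * b) ∨ (a = 0 ∧ b = 0) ∨ (a = -1 ∧ b = -1) ∨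
      (a = -1 ∧ b = -2) ∨ (a = -2 ∧ b = -1) ∨ (a = -1 ∧ b = -3) ∨ (a = -3 ∧ b = -1) := by
  rcases eq_or_lt_of_le ha with rfl | ha'
  · exact Or.inr (Or.inl ⟨rfl, hab.1 rfl⟩)
  have hb' : b < 0 := lt_of_le_of_ne hb fun h => ha'.ne (hab.2 h)
  by_cases h4 : 4 ≤ a * b
  · exact Or.inl ⟨ha', hb', h4⟩
  have ha3 : -3 ≤ a := by nlinarith
  have hb3 : -3 ≤ b := by nlinarith
  interval_cases a <;> interval_cases b <;> omega

variable (C) in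
def IsPosPair (x : Fin n → ℤ) (i j : Fin n) : Prop := 0 < x i ∧ 0 < 2 * x i - C i j * x j

lemma isPosPair_srefPerm {i j : Fin n} (hji : C j i < 0)
    (h4 : 4 ≤ C i j * C j i) {x : Fin n → ℤ} (hx : IsPosPair C x j i) :
    IsPosPair C (srefPerm n C hC j x) i j := by
  obtain ⟨hxj, hxji⟩ := hx
  simp only [IsPosPair, srefPerm_apply, hC]
  constructor <;> nlinarith

lemma isPosPair_alt {i j : Fin n} (hij : C i j < 0) (hji : C j i < 0)
    (h4 : 4 ≤ C i j * C j i) {x : Fin n → ℤ} (hxi : IsPosPair C x i j)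
    (hxj : IsPosPair C x j i) (k : ℕ) :
    IsPosPair C (wordProd hC (alt j i k) x) i j := by
  induction k generalizing i j with
  | zero => exact hxi
  | succ k ih =>
    rw [alt, wordProd_cons, Equiv.Perm.mul_apply]
    exact isPosPair_srefPerm hji h4 (ih hji hij (by linarith) hxj hxi)

lemma rank2_alt_pos_of_four_le {i j : Fin n} (hij : C i j < 0) (hji : C j i < 0)
    (h4 : 4 ≤ C i j * C j i) {x : Fin n → ℤ} (hxi : 0 < x i) (hxj : 0 < x j) (k : ℕ) :
    0 < wordProd hC (alt j i k) x i :=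
  (isPosPair_alt hij hji h4 ⟨hxi, by nlinarith⟩ ⟨hxj, by nlinarith⟩ k).1

variable (hC) in
def ShortOrPos (i j : Fin n) (k : ℕ) : Prop :=
  (∃ l : List (Fin n), l.length = k ∧ wordProd hC (alt i j (k + 2)) = wordProd hC l) ∨
    ∀ x : Fin n → ℤ, 0 < x i → 0 < x j → 0 < wordProd hC (alt j i (k + 1)) x i

lemma shortOrPos_of_braid {i j : Fin n} {M : ℕ} (hM : 1 ≤ M)
    (hbr : wordProd hC (alt i j M) = wordProd hC (alt j i M))
    (hpos : ∀ k < M - 1, ∀ x : Fin n → ℤ, 0 < x i → 0 < x j →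
      0 < wordProd hC (alt j i (k + 1)) x i) (k : ℕ) :
    ShortOrPos hC i j k := by
  rcases lt_or_ge M (k + 2) with hk | hk
  · exact Or.inl (exists_short_word_of_braid hbr hM hk)
  · exact Or.inr (hpos k (by omega))

-- The order of `s_i s_j` when `C i j * C j i = p ∈ {0, 1, 2, 3}`.
def coxeterOrder (p : ℤ) : ℕ := if p = 0 then 2 else if p = 1 then 3 else if p = 2 then 4 else 6

lemma shortOrPos {i j : Fin n} (hij : C i j ≤ 0) (hji : C j i ≤ 0)
    (hzero : C i j = 0 ↔ C j i = 0) (k : ℕ) : ShortOrPos hC i j k := by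
  rcases int_pair_cases hij hji hzero with ⟨hij, hji, h4⟩ | ⟨hij, hji⟩ | ⟨hij, hji⟩ |
    ⟨hij, hji⟩ | ⟨hij, hji⟩ | ⟨hij, hji⟩ | ⟨hij, hji⟩
  · exact Or.inr fun x hxi hxj => rank2_alt_pos_of_four_le hij hji h4 hxi hxj (k + 1)
  all_goals
    refine shortOrPos_of_braid (M := coxeterOrder (C i j * C j i)) ?_ ?_ ?_ k <;>
      simp only [coxeterOrder, hij, hji, Int.reduceMul, Int.reduceEq, ↓reduceIte, Nat.reduceSub]
  all_goals first
    | (ext x l; simp only [alt, wordProd_cons, wordProd_nil, mul_one, Equiv.Perm.mul_apply,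
        srefPerm_apply, hC, hij, hji]; ring)
    | (intro k hk x hxi hxj; interval_cases k <;>
        simp only [alt, wordProd_cons, wordProd_nil, mul_one, Equiv.Perm.mul_apply,
          srefPerm_apply, hC, hij, hji] <;> linarith)
    | norm_num

theorem apply_pos_of_wlen_le (hoff : ∀ i j, i ≠ j → C i j ≤ 0)
    (hzero : ∀ i j, C i j = 0 → C j i = 0) {μ : Fin n → ℤ} (hμ : ∀ t, 0 < μ t)
    {w : Equiv.Perm (Fin n → ℤ)} (hw : w ∈ weylGroup n C hC) {i : Fin n}
    (hi : wlen n C hC w ≤ wlen n C hC (srefPerm n C hC i * w)) : 0 < w μ i := by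
  induction h : wlen n C hC w using Nat.strong_induction_on generalizing w i with
  | _ m ih =>
  rcases eq_one_or_exists_wlen_srefPerm_mul_lt hw with rfl | ⟨j, hj⟩
  · exact hμ i
  have hij : i ≠ j := by rintro rfl; omega
  have hjw := mul_mem (srefPerm_mem j) hw
  have hlen := wlen_srefPerm_mul_le j hjw
  rw [srefPerm_mul_cancel_left] at hlen
  have hw1 : w = wordProd hC (alt j i (0 + 1)) * (srefPerm n C hC j * w) := by
    simp [alt, srefPerm_mul_cancel_left]
  obtain ⟨k, v, hv, rfl, hwv, hvi, hvj⟩ := exists_maximal_alt_mul hjw hw1 (by omega)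
  rcases shortOrPos (hC := hC) (hoff i j hij) (hoff j i hij.symm) ⟨hzero i j, hzero j i⟩ k
    with ⟨l, hl, hshort⟩ | hpos
  · have : wlen n C hC (srefPerm n C hC i * (wordProd hC (alt j i (k + 1)) * v)) ≤
        k + wlen n C hC v := by
      rw [← mul_assoc, ← wordProd_cons, show i :: alt j i (k + 1) = alt i j (k + 2) from rfl,
        hshort, ← hl]
      exact wlen_wordProd_mul_le l hv
    omega
  · exact hpos _ (ih _ (by omega) hv hvi rfl) (ih _ (by omega) hv hvj rfl)

theorem apply_nonneg_of_wlen_le (hoff : ∀ i j, i ≠ j → C i j ≤ 0)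
    (hzero : ∀ i j, C i j = 0 → C j i = 0) {lam : Fin n → ℤ} (hlam : ∀ t, 0 ≤ lam t)
    {w : Equiv.Perm (Fin n → ℤ)} (hw : w ∈ weylGroup n C hC) {i : Fin n}
    (hi : wlen n C hC w ≤ wlen n C hC (srefPerm n C hC i * w)) : 0 ≤ w lam i := by
  -- Apply the strict version to `N λ + ρ`, where `ρ = 1` in these coordinates and `N ≥ (wρ)_i`.
  set N : ℤ := ((w 1 i).toNat : ℤ)
  have hN : w 1 i ≤ N := Int.self_le_toNat _
  have hstrict : ∀ t, 0 < (N • lam + 1) t := fun t => by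
    have := mul_nonneg (show 0 ≤ N by positivity) (hlam t)
    simp only [Pi.add_apply, Pi.smul_apply, smul_eq_mul, Pi.one_apply]
    omega
  have hpos := apply_pos_of_wlen_le hoff hzero hstrict hw hi
  rw [map_add_of_mem hw, map_zsmul_of_mem hw] at hpos
  simp only [Pi.add_apply, Pi.smul_apply, smul_eq_mul] at hpos
  by_contra! hneg
  have : N * w lam i ≤ N * -1 := mul_le_mul_of_nonneg_left (by omega) (by positivity)
  linarith

lemma srefPerm_eq_sub (i : Fin n) (x : Fin n → ℤ) :
    srefPerm n C hC i x = x - x i • alphaRoot n C i := by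
  ext j
  simp [alphaRoot, mul_comm]

section InvariantForm

variable [Fintype (weylGroup n C hC)]

variable (hC) in
def invForm : LinearMap.BilinForm ℤ (Fin n → ℤ) :=
  ∑ v : weylGroup n C hC, (dotProductBilin ℤ ℤ).compl₁₂ (weylLin v.2) (weylLin v.2)

lemma invForm_apply (x y : Fin n → ℤ) :
    invForm hC x y = ∑ v : weylGroup n C hC, v.1 x ⬝ᵥ v.1 y := by
  simp [invForm]

lemma invForm_comm (x y : Fin n → ℤ) : invForm hC x y = invForm hC y x := by
  simp [invForm_apply, dotProduct_comm]

lemma invForm_apply_apply {u : Equiv.Perm (Fin n → ℤ)} (hu : u ∈ weylGroup n C hC)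
    (x y : Fin n → ℤ) : invForm hC (u x) (u y) = invForm hC x y := by
  simp only [invForm_apply]
  exact Fintype.sum_equiv (Equiv.mulRight ⟨u, hu⟩) _ _ fun v => rfl

lemma invForm_self_pos {x : Fin n → ℤ} (hx : x ≠ 0) : 0 < invForm hC x x := by
  have hsq (y : Fin n → ℤ) : 0 ≤ y ⬝ᵥ y := Finset.sum_nonneg fun k _ => mul_self_nonneg (y k)
  rw [invForm_apply]
  calc 0 < x ⬝ᵥ x := (hsq x).lt_of_ne (Ne.symm (dotProduct_self_eq_zero.not.2 hx))
    _ ≤ _ := Finset.single_le_sum (f := fun v : weylGroup n C hC => v.1 x ⬝ᵥ v.1 x)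
        (fun v _ => hsq _) (Finset.mem_univ 1)

lemma two_mul_invForm_alphaRoot (i : Fin n) (y : Fin n → ℤ) :
    2 * invForm hC (alphaRoot n C i) y =
      invForm hC (alphaRoot n C i) (alphaRoot n C i) * y i := by
  have h := invForm_apply_apply (hC := hC) (srefPerm_mem i) (alphaRoot n C i) y
  simp only [srefPerm_eq_sub, show alphaRoot n C i i = 2 from hC i, map_sub, map_smul,
    LinearMap.sub_apply, LinearMap.smul_apply, smul_eq_mul] at h
  linarith

lemma invForm_alphaRoot_self_pos (i : Fin n) :
    0 < invForm hC (alphaRoot n C i) (alphaRoot n C i) :=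
  invForm_self_pos fun h => by simpa [alphaRoot, hC] using congrFun h i

lemma invForm_add_alphaRoot_self (x : Fin n → ℤ) (i : Fin n) :
    invForm hC (x + alphaRoot n C i) (x + alphaRoot n C i) =
      invForm hC x x + invForm hC (alphaRoot n C i) (alphaRoot n C i) * (x i + 1) := by
  have h := two_mul_invForm_alphaRoot (hC := hC) i x
  simp only [map_add, LinearMap.add_apply, invForm_comm x (alphaRoot n C i)]
  linarith

lemma invForm_self_le_of_leQ {μ lam : Fin n → ℤ} (hμ : ∀ t, 0 ≤ μ t) (hlam : ∀ t, 0 ≤ lam t)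
    (hle : leQ n C μ lam) : invForm hC μ μ ≤ invForm hC lam lam := by
  obtain ⟨b, hb⟩ := hle
  have hdiff : 2 * (invForm hC lam lam - invForm hC μ μ) =
      ∑ k, (b k : ℤ) * (invForm hC (alphaRoot n C k) (alphaRoot n C k) * (lam k + μ k)) := by
    have : invForm hC lam lam - invForm hC μ μ = invForm hC (lam - μ) (lam + μ) := by
      simp only [map_sub, map_add, LinearMap.sub_apply, invForm_comm μ lam]
      ring
    rw [this, hb, map_sum, LinearMap.sum_apply, Finset.mul_sum]
    refine Finset.sum_congr rfl fun k _ => ?_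
    rw [map_smul, LinearMap.smul_apply, smul_eq_mul, mul_left_comm, two_mul_invForm_alphaRoot]
    rfl
  have hsum : 0 ≤ ∑ k, (b k : ℤ) *
      (invForm hC (alphaRoot n C k) (alphaRoot n C k) * (lam k + μ k)) :=
    Finset.sum_nonneg fun k _ => mul_nonneg (Int.natCast_nonneg _)
      (mul_nonneg (invForm_alphaRoot_self_pos k).le (add_nonneg (hlam k) (hμ k)))
  linarith

end InvariantForm

end CartanWeyl

open CartanWeyl

theorem stmt3_general (n : ℕ) (C : Fin n → Fin n → ℤ) (hC : ∀ i, C i i = 2)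
    (hoff : ∀ i j, i ≠ j → C i j ≤ 0) (hzero : ∀ i j, C i j = 0 → C j i = 0)
    (hfin : Finite (weylGroup n C hC))
    (lam : Fin n → ℤ) (hlam : ∀ i, 0 ≤ lam i)
    (i : Fin n) (w : Equiv.Perm (Fin n → ℤ)) (hw : w ∈ weylGroup n C hC)
    (hlen : wlen n C hC (srefPerm n C hC i * w) = wlen n C hC w + 1) :
    w lam + alphaRoot n C i ∉ weightPSet n C hC lam := by
  rintro ⟨u, hu, μ, hμ, hle, heq⟩
  have := Fintype.ofFinite (weylGroup n C hC)
  have hdom : 0 ≤ w lam i := apply_nonneg_of_wlen_le hoff hzero hlam hw (by omega)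
  have hnorm : invForm hC μ μ = invForm hC lam lam +
      invForm hC (alphaRoot n C i) (alphaRoot n C i) * (w lam i + 1) := by
    rw [← invForm_apply_apply hu, ← heq, invForm_add_alphaRoot_self, invForm_apply_apply hw]
  nlinarith [invForm_self_le_of_leQ (hC := hC) hμ hlam hle, invForm_alphaRoot_self_pos (hC := hC) i]

/-- Let `λ ∈ P⁺`, `i ∈ I` and `w ∈ W` with `ℓ(s_i w) = ℓ(w) + 1`. Then
`wλ + α_i ∉ P(λ) = { vμ : v ∈ W, μ ∈ P⁺, μ ≤ λ }`. -/
theorem stmt3 (n : ℕ) (hn : 0 < n) (C : Fin n → Fin n → ℤ) (hC : ∀ i, C i i = 2)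
    (hoff : ∀ i j, i ≠ j → C i j ≤ 0) (hzero : ∀ i j, C i j = 0 → C j i = 0)
    (d : Fin n → ℤ) (hd : ∀ i, 0 < d i) (hsym : ∀ i j, d i * C i j = d j * C j i)
    (hfin : Finite (weylGroup n C hC))
    (lam : Fin n → ℤ) (hlam : ∀ i, 0 ≤ lam i)
    (i : Fin n) (w : Equiv.Perm (Fin n → ℤ)) (hw : w ∈ weylGroup n C hC)
    (hlen : wlen n C hC (srefPerm n C hC i * w) = wlen n C hC w + 1) :
    w lam + alphaRoot n C i ∉ weightPSet n C hC lam :=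
  stmt3_general n C hC hoff hzero hfin lam hlam i w hw hlen
end

section
/- Let ξ ∈ ℂ^× be an element of infinite multiplicative order. Then every polynomial f ∈ ℂ[u] with f(0) = 1 admits a unique factorization f(u) = ∏_{k=1}^m f_{a_k, r_k}(u), where m ∈ ℤ_{≥0}, a_k ∈ ℂ^×, r_k ∈ ℤ_{≥1}, and for all k ≠ j and all 0 ≤ p < min{r_k, r_j} one has a_k/a_j ≠ ξ^{±(r_k + r_j − 2p)}. (Uniqueness is up to permutation of the factors.) -/
/-!
Writing `f = ∏_{c ∈ M} (1 - c u)` over the multiset `M ⊆ ℂ^×` of its inverse roots, `f_{a,r}`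
contributes `a ξ^{r-1}, a ξ^{r-3}, …, a ξ^{1-r}`, a segment of an orbit of `z ↦ ξ⁻² z`. Since `ξ`
has infinite order this map is injective without periodic points, and non-resonance says exactly
that the segments are in general position. So it suffices to split a finite multiset `M`, in a set
with such a map `s`, uniquely into segments in general position. Pick `e ∈ M` with no predecessor
in `M` and the maximal run `e, s e, …, s^{r-1} e` inside `M`. General position forces every such
splitting to contain this run as one segment: removing it gives uniqueness by induction, and
splitting it off greedily gives existence.
-/

open Polynomial

/-- The `q`-string polynomial `f_{a,r}(u) = ∏_{j=0}^{r-1} (1 - a ξ^{r-1-2j} u)`. -/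
noncomputable def qString (ξ a : ℂ) (r : ℕ) : Polynomial ℂ :=
  ∏ j ∈ Finset.range r, (1 - C (a * ξ ^ ((r : ℤ) - 1 - 2 * j)) * X)

/-- The non-resonance condition on the collection of pairs `(a_k, r_k)`:
for all `k ≠ j` and `0 ≤ p < min (r_k) (r_j)`, `a_k / a_j ≠ ξ^{±(r_k + r_j - 2p)}`. -/
def NonResonant (ξ : ℂ) {m : ℕ} (a : Fin m → ℂ) (r : Fin m → ℕ) : Prop :=
  ∀ k j, k ≠ j → ∀ p : ℕ, p < min (r k) (r j) →
    a k / a j ≠ ξ ^ ((r k : ℤ) + (r j : ℤ) - 2 * p) ∧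
    a k / a j ≠ ξ ^ (-((r k : ℤ) + (r j : ℤ) - 2 * p))

section OrbitSegment

open Function

variable {α : Type*} {s : α → α}

def orbitSegment (s : α → α) (x : α × ℕ) : Multiset α :=
  (Multiset.range x.2).map fun j => s^[j] x.1

/-- `y` does not start at one of `s x.1, …, s^[x.2] x.1` and end beyond `x`, and vice versa:
the union of `x` and `y` is never a segment strictly longer than both. -/
def GeneralPosition (s : α → α) (x y : α × ℕ) : Prop :=
  ∀ p < min x.2 y.2, y.1 ≠ s^[x.2 - p] x.1 ∧ x.1 ≠ s^[y.2 - p] y.1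

structure IsSegmentDecomposition (s : α → α) (T : Multiset (α × ℕ)) (M : Multiset α) :
    Prop where
  pos : ∀ x ∈ T, 0 < x.2
  generalPosition : ∀ x ∈ T, ∀ y ∈ T, GeneralPosition s x y
  bind_eq : T.bind (orbitSegment s) = M

structure IsTopSegment (s : α → α) (M : Multiset α) (x : α × ℕ) : Prop where
  pos : 0 < x.2
  top : ∀ w ∈ M, ∀ n, s^[n] w = x.1 → n = 0
  iterate_mem : ∀ j < x.2, s^[j] x.1 ∈ M
  iterate_notMem : s^[x.2] x.1 ∉ M

theorem mem_orbitSegment {x : α × ℕ} {z : α} :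
    z ∈ orbitSegment s x ↔ ∃ j < x.2, s^[j] x.1 = z := by
  simp [orbitSegment]

theorem fst_mem_orbitSegment {x : α × ℕ} (hx : 0 < x.2) : x.1 ∈ orbitSegment s x :=
  mem_orbitSegment.2 ⟨0, hx, rfl⟩

theorem GeneralPosition.symm {x y : α × ℕ} (h : GeneralPosition s x y) :
    GeneralPosition s y x := fun p hp =>
  (h p (min_comm y.2 x.2 ▸ hp)).symm

theorem iterate_eq_self_iff (haper : periodicPts s = ∅) {n : ℕ} {z : α} :
    s^[n] z = z ↔ n = 0 := by
  refine ⟨fun h => ?_, fun h => h ▸ rfl⟩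
  by_contra hn
  have hz : z ∈ periodicPts s := mk_mem_periodicPts (Nat.pos_of_ne_zero hn) h
  simp [haper] at hz

theorem generalPosition_self (haper : periodicPts s = ∅) (x : α × ℕ) :
    GeneralPosition s x x := fun p hp => by
  have hne : x.1 ≠ s^[x.2 - p] x.1 := fun h => by
    have := (iterate_eq_self_iff haper).1 h.symm
    omega
  exact ⟨hne, hne⟩

theorem eq_iterate_sub_of_iterate_eq (hinj : Injective s) {j k : ℕ} {y z : α}
    (h : s^[j] y = s^[k] z) (hjk : j ≤ k) : y = s^[k - j] z :=
  hinj.iterate j (by rwa [← iterate_add_apply, Nat.add_sub_cancel' hjk])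

theorem injective_iterate_apply (hinj : Injective s) (haper : periodicPts s = ∅) (z : α) :
    Injective fun n => s^[n] z := by
  intro m n h
  have h₁ := (iterate_eq_self_iff haper).1 (iterate_cancel hinj h)
  have h₂ := (iterate_eq_self_iff haper).1 (iterate_cancel hinj h.symm)
  omega

theorem nodup_orbitSegment (hinj : Injective s) (haper : periodicPts s = ∅) (x : α × ℕ) :
    (orbitSegment s x).Nodup :=
  (Multiset.nodup_range _).map (injective_iterate_apply hinj haper x.1)

/-- A point of `M` with the largest number of points of `M` below it has nothing above it. -/
theorem exists_top_mem (haper : periodicPts s = ∅) {M : Multiset α} (hM : M ≠ 0) :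
    ∃ e ∈ M, ∀ w ∈ M, ∀ n, s^[n] w = e → n = 0 := by
  classical
  let below (z : α) := M.toFinset.filter fun w => ∃ n, s^[n] z = w
  obtain ⟨e, he, hmax⟩ :=
    M.toFinset.exists_max_image (fun z => (below z).card) (Multiset.toFinset_nonempty.2 hM)
  refine ⟨e, Multiset.mem_toFinset.1 he, fun w hw n hn => by_contra fun hn0 => ?_⟩
  have hsub : below e ⊆ below w := by
    simp only [below, Finset.subset_iff, Finset.mem_filter]
    rintro v ⟨hv, m, rfl⟩
    exact ⟨hv, m + n, by rw [iterate_add_apply, hn]⟩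
  have hw_below : w ∈ below w := Finset.mem_filter.2 ⟨Multiset.mem_toFinset.2 hw, 0, rfl⟩
  have hw_not_below : w ∉ below e := by
    rintro hw'
    obtain ⟨m, hm⟩ := (Finset.mem_filter.1 hw').2
    have := (iterate_eq_self_iff haper).1 (show s^[m + n] w = w by rw [iterate_add_apply, hn, hm])
    omega
  have hlt : (below e).card < (below w).card :=
    Finset.card_lt_card ((Finset.ssubset_iff_of_subset hsub).2 ⟨w, hw_below, hw_not_below⟩)
  exact hlt.not_ge (hmax w (Multiset.mem_toFinset.2 hw))

theorem exists_isTopSegment (hinj : Injective s) (haper : periodicPts s = ∅) {M : Multiset α}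
    (hM : M ≠ 0) : ∃ x, IsTopSegment s M x := by
  classical
  obtain ⟨e, he, htop⟩ := exists_top_mem haper hM
  have hleave : ∃ n, s^[n] e ∉ M := by
    by_contra! h
    exact Set.infinite_of_injective_forall_mem (injective_iterate_apply hinj haper e) h
      M.finite_toSet
  refine ⟨(e, Nat.find hleave), ⟨Nat.pos_of_ne_zero fun h => ?_, htop,
    fun j hj => not_not.1 (Nat.find_min hleave hj), Nat.find_spec hleave⟩⟩
  have hspec := Nat.find_spec hleave
  rw [show Nat.find hleave = 0 from h] at hspec
  exact hspec he

namespace IsTopSegment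

variable {M : Multiset α} {x : α × ℕ}

theorem orbitSegment_le (hinj : Injective s) (haper : periodicPts s = ∅)
    (hx : IsTopSegment s M x) : orbitSegment s x ≤ M :=
  (Multiset.le_iff_subset (nodup_orbitSegment hinj haper x)).2 fun z hz => by
    obtain ⟨j, hj, rfl⟩ := mem_orbitSegment.1 hz
    exact hx.iterate_mem j hj

theorem sub_orbitSegment_lt [DecidableEq α] (hinj : Injective s) (haper : periodicPts s = ∅)
    (hx : IsTopSegment s M x) : M - orbitSegment s x < M :=
  calc M - orbitSegment s x < orbitSegment s x + (M - orbitSegment s x) :=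
        lt_add_of_pos_left _ (pos_iff_ne_zero.2 fun h0 => by
          simpa [h0] using fst_mem_orbitSegment (s := s) hx.pos)
    _ = M := add_tsub_cancel_of_le (hx.orbitSegment_le hinj haper)

end IsTopSegment

namespace IsSegmentDecomposition

variable {T : Multiset (α × ℕ)} {M : Multiset α}

theorem mem (h : IsSegmentDecomposition s T M) {x : α × ℕ} (hx : x ∈ T) {z : α}
    (hz : z ∈ orbitSegment s x) : z ∈ M :=
  h.bind_eq ▸ Multiset.mem_bind.2 ⟨x, hx, hz⟩

theorem zero : IsSegmentDecomposition s 0 0 where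
  pos := by simp
  generalPosition := by simp
  bind_eq := Multiset.zero_bind _

theorem eq_zero (h : IsSegmentDecomposition s T 0) : T = 0 :=
  Multiset.eq_zero_of_forall_notMem fun x hx =>
    Multiset.notMem_zero _ (h.mem hx (fst_mem_orbitSegment (h.pos x hx)))

theorem cons (haper : periodicPts s = ∅) (h : IsSegmentDecomposition s T M) {x : α × ℕ}
    (hx : 0 < x.2) (hxT : ∀ y ∈ T, GeneralPosition s x y) :
    IsSegmentDecomposition s (x ::ₘ T) (orbitSegment s x + M) where
  pos := Multiset.forall_mem_cons.2 ⟨hx, h.pos⟩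
  generalPosition := by
    simp only [Multiset.forall_mem_cons]
    exact ⟨⟨generalPosition_self haper x, hxT⟩,
      fun y hy => ⟨(hxT y hy).symm, h.generalPosition y hy⟩⟩
  bind_eq := by rw [Multiset.cons_bind, h.bind_eq]

theorem erase [DecidableEq α] (h : IsSegmentDecomposition s T M) {x : α × ℕ} (hx : x ∈ T) :
    IsSegmentDecomposition s (T.erase x) (M - orbitSegment s x) where
  pos y hy := h.pos y (Multiset.mem_of_mem_erase hy)
  generalPosition y hy z hz :=
    h.generalPosition y (Multiset.mem_of_mem_erase hy) z (Multiset.mem_of_mem_erase hz)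
  bind_eq := by
    rw [← h.bind_eq, ← Multiset.cons_erase hx, Multiset.cons_bind, Multiset.erase_cons_head,
      add_tsub_cancel_left]

/-- Take the longest piece `y` through the top `x.1`: it starts there, fits inside the run `x`,
and cannot stop earlier, since the piece through `s^[y.2] x.1` would then either start inside `y`
(violating general position), start at `x.1` (longer than `y`), or start above the top. -/
theorem mem_of_isTopSegment (hinj : Injective s) (h : IsSegmentDecomposition s T M)
    {x : α × ℕ} (hx : IsTopSegment s M x) : x ∈ T := by
  classical
  obtain ⟨y, hyT, hxy, hlongest⟩ : ∃ y ∈ T, x.1 ∈ orbitSegment s y ∧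
      ∀ z ∈ T, x.1 ∈ orbitSegment s z → z.2 ≤ y.2 := by
    have hne : (T.filter (x.1 ∈ orbitSegment s ·)).toFinset.Nonempty := by
      obtain ⟨y, hy, hxy⟩ := Multiset.mem_bind.1 (h.bind_eq ▸ hx.iterate_mem 0 hx.pos)
      exact ⟨y, by simpa using ⟨hy, hxy⟩⟩
    obtain ⟨y, hy, hmax⟩ := Finset.exists_max_image _ Prod.snd hne
    simp only [Multiset.mem_toFinset, Multiset.mem_filter] at hy hmax
    exact ⟨y, hy.1, hy.2, fun z hz hxz => hmax z ⟨hz, hxz⟩⟩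
  have hmemM (z) (hz : z ∈ T) : z.1 ∈ M := h.mem hz (fst_mem_orbitSegment (h.pos z hz))
  have hy₁ : y.1 = x.1 := by
    obtain ⟨i, -, hi⟩ := mem_orbitSegment.1 hxy
    obtain rfl := hx.top y.1 (hmemM y hyT) i hi
    exact hi
  have hle : y.2 ≤ x.2 := by
    by_contra! hlt
    exact hx.iterate_notMem (h.mem hyT (mem_orbitSegment.2 ⟨x.2, hlt, by rw [hy₁]⟩))
  have hge : x.2 ≤ y.2 := by
    by_contra! hlt
    obtain ⟨z, hzT, hz⟩ := Multiset.mem_bind.1 (h.bind_eq ▸ hx.iterate_mem y.2 hlt)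
    obtain ⟨j, hj, hzj⟩ := mem_orbitSegment.1 hz
    rcases lt_trichotomy j y.2 with hjy | rfl | hjy
    · exact (h.generalPosition y hyT z hzT j (lt_min hjy hj)).1
        (hy₁ ▸ eq_iterate_sub_of_iterate_eq hinj hzj hjy.le)
    · have hz₁ : z.1 = x.1 := by simpa using eq_iterate_sub_of_iterate_eq hinj hzj le_rfl
      exact (hlongest z hzT (hz₁ ▸ fst_mem_orbitSegment (h.pos z hzT))).not_gt hj
    · have := hx.top z.1 (hmemM z hzT) (j - y.2)
        (eq_iterate_sub_of_iterate_eq hinj hzj.symm hjy.le).symm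
      omega
  exact (Prod.ext hy₁ (le_antisymm hle hge) : y = x) ▸ hyT

theorem unique (hinj : Injective s) (haper : periodicPts s = ∅) {T' : Multiset (α × ℕ)}
    (h : IsSegmentDecomposition s T M) (h' : IsSegmentDecomposition s T' M) : T = T' := by
  classical
  induction M using Multiset.strongInductionOn generalizing T T' with
  | ih M ih =>
  rcases eq_or_ne M 0 with rfl | hM
  · rw [h.eq_zero, h'.eq_zero]
  obtain ⟨x, hx⟩ := exists_isTopSegment hinj haper hM
  have hxT := h.mem_of_isTopSegment hinj hx
  have hxT' := h'.mem_of_isTopSegment hinj hx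
  rw [← Multiset.cons_erase hxT, ← Multiset.cons_erase hxT',
    ih _ (hx.sub_orbitSegment_lt hinj haper) (h.erase hxT) (h'.erase hxT')]

end IsSegmentDecomposition

theorem exists_isSegmentDecomposition (hinj : Injective s) (haper : periodicPts s = ∅)
    (M : Multiset α) : ∃ T, IsSegmentDecomposition s T M := by
  classical
  induction M using Multiset.strongInductionOn with
  | ih M ih =>
  rcases eq_or_ne M 0 with rfl | hM
  · exact ⟨0, .zero⟩
  obtain ⟨x, hx⟩ := exists_isTopSegment hinj haper hM
  have hle := hx.orbitSegment_le hinj haper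
  obtain ⟨T, hT⟩ := ih _ (hx.sub_orbitSegment_lt hinj haper)
  have hsubM : ∀ z ∈ M - orbitSegment s x, z ∈ M := fun z hz =>
    Multiset.mem_of_le (Multiset.sub_le_self _ _) hz
  refine ⟨x ::ₘ T, add_tsub_cancel_of_le hle ▸ hT.cons haper hx.pos fun y hy p hp => ⟨?_, ?_⟩⟩
  · rintro hyx
    obtain ⟨hpx, hpy⟩ := lt_min_iff.1 hp
    refine hx.iterate_notMem (hsubM _ (hT.mem hy (mem_orbitSegment.2 ⟨p, hpy, ?_⟩)))
    rw [hyx, ← iterate_add_apply, Nat.add_sub_cancel' hpx.le]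
  · rintro hxy
    have := hx.top y.1 (hsubM _ (hT.mem hy (fst_mem_orbitSegment (hT.pos y hy)))) _ hxy.symm
    omega

theorem existsUnique_isSegmentDecomposition (hinj : Injective s) (haper : periodicPts s = ∅)
    (M : Multiset α) : ∃! T, IsSegmentDecomposition s T M :=
  let ⟨T, hT⟩ := exists_isSegmentDecomposition hinj haper M
  ⟨T, hT, fun _ hT' => hT'.unique hinj haper hT⟩

end OrbitSegment

section InverseRoots

variable {K : Type*} [Field K]

theorem roots_one_sub_C_mul_X (c : Kˣ) : (1 - C (c : K) * X).roots = {((c⁻¹ : Kˣ) : K)} := by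
  have h : 1 - C (c : K) * X = C ((-c : Kˣ) : K) * X - C (-1) := by simp; ring
  rw [h, roots_C_mul_X_sub_C_of_IsUnit]
  simp

theorem X_sub_C_eq_C_mul_one_sub_C_mul_X (c : Kˣ) :
    X - C (c : K) = C (-(c : K)) * (1 - C ((c⁻¹ : Kˣ) : K) * X) := by
  rw [mul_sub, mul_one, ← mul_assoc, ← C_mul, neg_mul, Units.mul_inv, C_neg, C_neg, C_1]
  ring

theorem prod_one_sub_C_mul_X_injective :
    Function.Injective fun M : Multiset Kˣ => (M.map fun c : Kˣ => 1 - C (c : K) * X).prod := by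
  have hroots (M : Multiset Kˣ) : (M.map fun c : Kˣ => 1 - C (c : K) * X).prod.roots =
      M.map fun c => ((c⁻¹ : Kˣ) : K) := by
    rw [roots_multiset_prod _ fun h0 => ?_, Multiset.bind_map]
    · simp only [roots_one_sub_C_mul_X, Multiset.bind_singleton]
    · obtain ⟨c, -, hc⟩ := Multiset.mem_map.1 h0
      simpa using congrArg (eval 0) hc
  intro M M' h
  have := congrArg roots h
  simp only [hroots] at this
  exact Multiset.map_injective (Units.val_injective.comp inv_injective) this

theorem exists_eq_prod_one_sub_C_mul_X [IsAlgClosed K] {f : K[X]} (hf : f.eval 0 = 1) :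
    ∃ M : Multiset Kˣ, f = (M.map fun c : Kˣ => 1 - C (c : K) * X).prod := by
  obtain ⟨R, hR⟩ : ∃ R : Multiset Kˣ, R.map (↑) = f.roots := CanLift.prf _ fun z hz =>
    isUnit_iff_ne_zero.2 fun h0 => by
      have hroot := (mem_roots'.1 hz).2
      rw [h0, IsRoot, hf] at hroot
      exact one_ne_zero hroot
  set P := ((R.map (·⁻¹)).map fun c : Kˣ => 1 - C (c : K) * X).prod
  have hfac : f = C (f.leadingCoeff * (R.map fun z : Kˣ => -(z : K)).prod) * P := by
    conv_lhs => rw [(IsAlgClosed.splits f).eq_prod_roots, ← hR]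
    simp only [P, Multiset.map_map, Function.comp_def, X_sub_C_eq_C_mul_one_sub_C_mul_X,
      Multiset.prod_map_mul, C_mul, map_multiset_prod, mul_assoc]
  have hP : P.eval 0 = 1 := by simp [P, eval_multiset_prod]
  have hκ : f.leadingCoeff * (R.map fun z : Kˣ => -(z : K)).prod = 1 := by
    simpa [hP, hf] using (congrArg (eval 0) hfac).symm
  exact ⟨_, by rw [hfac, hκ, C_1, one_mul]⟩

end InverseRoots

theorem periodicPts_mul_right_eq_empty {G : Type*} [Group G] {q : G} (hq : ¬IsOfFinOrder q) :
    Function.periodicPts (· * q) = ∅ :=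
  Set.eq_empty_of_forall_notMem fun z hz => by
    obtain ⟨n, hn, hzn⟩ := Function.mem_periodicPts.1 hz
    have hzq : z * q ^ n = z := by simpa [Function.IsPeriodicPt, Function.IsFixedPt] using hzn
    exact hq (isOfFinOrder_iff_pow_eq_one.2 ⟨n, hn, mul_eq_left.1 hzq⟩)

theorem mul_zpow_eq_mul_zpow_iff_div_eq {G : Type*} [CommGroup G] {a b u : G} {m n : ℤ} :
    b * u ^ m = a * u ^ n ↔ a / b = u ^ (m - n) := by
  rw [div_eq_iff_eq_mul, ← mul_inv_eq_iff_eq_mul, eq_comm, zpow_sub, mul_comm _ b, mul_assoc]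

theorem Fintype.exists_equiv_of_map_univ_eq {ι κ β : Type*} [Fintype ι] [Fintype κ]
    {f : ι → β} {g : κ → β} (h : Finset.univ.val.map f = Finset.univ.val.map g) :
    ∃ σ : ι ≃ κ, ∀ i, f i = g (σ i) := by
  classical
  have hcard (c : β) : Fintype.card {i // f i = c} = Fintype.card {k // g k = c} := by
    simp only [Fintype.card_subtype, Finset.card_def, Finset.filter_val]
    simpa [Multiset.count_map, eq_comm] using congrArg (Multiset.count c) h
  exact ⟨Equiv.ofFiberEquiv fun c => Fintype.equivOfCardEq (hcard c),
    fun i => (Equiv.ofFiberEquiv_map _ i).symm⟩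

theorem Multiset.exists_fin_map_univ_eq {α β : Type*} (e : α ≃ β) (T : Multiset β) :
    ∃ (m : ℕ) (g : Fin m → α), Finset.univ.val.map (e ∘ g) = T :=
  ⟨_, (T.map e.symm).toList.get, by
    rw [← Multiset.map_map, Fin.univ_val_map, List.ofFn_get, Multiset.coe_toList,
      Multiset.map_map, Equiv.self_comp_symm, Multiset.map_id]⟩

section QString

/-- `f_{a,r}` has the inverse roots `a ξ^{r-1}, a ξ^{r-3}, …`: the orbit segment of length `r`
under multiplication by `ξ⁻²` starting at `a ξ^{r-1}`. -/
def qSegment (u : ℂˣ) : ℂˣ × ℕ ≃ ℂˣ × ℕ where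
  toFun x := (x.1 * u ^ ((x.2 : ℤ) - 1), x.2)
  invFun x := (x.1 * u ^ (1 - (x.2 : ℤ)), x.2)
  left_inv x := by simp [mul_assoc, ← zpow_add]
  right_inv x := by simp [mul_assoc, ← zpow_add]

theorem periodicPts_mul_inv_sq_eq_empty {u : ℂˣ} (hu : ¬IsOfFinOrder u) :
    Function.periodicPts (· * (u ^ 2)⁻¹) = ∅ :=
  periodicPts_mul_right_eq_empty (by simpa [isOfFinOrder_inv_iff, isOfFinOrder_pow] using hu)

theorem mul_inv_sq_iterate_apply (u z : ℂˣ) (n : ℕ) :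
    (· * (u ^ 2)⁻¹)^[n] z = z * u ^ (-2 * (n : ℤ)) := by
  rw [mul_right_iterate_apply]
  group

theorem qString_eq_prod_orbitSegment (u a : ℂˣ) (r : ℕ) :
    qString u a r = ((orbitSegment (· * (u ^ 2)⁻¹) (qSegment u (a, r))).map
      fun c : ℂˣ => 1 - C (c : ℂ) * X).prod := by
  rw [qString, orbitSegment, Finset.prod_eq_multiset_prod, Multiset.map_map, Finset.range_val]
  refine congrArg _ (Multiset.map_congr rfl fun j _ => ?_)
  simp only [Function.comp_apply, mul_inv_sq_iterate_apply, qSegment, Equiv.coe_fn_mk, mul_assoc,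
    ← zpow_add, Units.val_mul, Units.val_zpow_eq_zpow_val]
  ring_nf

theorem generalPosition_qSegment_iff (u a b : ℂˣ) (r r' : ℕ) :
    GeneralPosition (· * (u ^ 2)⁻¹) (qSegment u (a, r)) (qSegment u (b, r')) ↔
      ∀ p < min r r', (a : ℂ) / b ≠ u ^ ((r : ℤ) + r' - 2 * p) ∧
        (a : ℂ) / b ≠ u ^ (-((r : ℤ) + r' - 2 * p)) := by
  simp only [GeneralPosition, qSegment, Equiv.coe_fn_mk, mul_inv_sq_iterate_apply, mul_assoc,
    ← zpow_add, ← Units.val_div_eq_div_val, ← Units.val_zpow_eq_zpow_val, ne_eq,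
    Units.val_inj]
  refine forall₂_congr fun p hp => and_congr (not_congr ?_) (not_congr ?_)
  · rw [mul_zpow_eq_mul_zpow_iff_div_eq]
    congr! 2
    push_cast [Nat.cast_sub (lt_min_iff.1 hp).1.le]
    ring
  · rw [eq_comm, mul_zpow_eq_mul_zpow_iff_div_eq]
    congr! 2
    push_cast [Nat.cast_sub (lt_min_iff.1 hp).2.le]
    ring

theorem isSegmentDecomposition_qSegment_iff {u : ℂˣ} (hu : ¬IsOfFinOrder u) {m : ℕ}
    (a : Fin m → ℂˣ) (r : Fin m → ℕ) (M : Multiset ℂˣ) :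
    IsSegmentDecomposition (· * (u ^ 2)⁻¹)
        (Finset.univ.val.map (qSegment u ∘ fun k => (a k, r k))) M ↔
      (∀ k, 1 ≤ r k) ∧
        (M.map fun c : ℂˣ => 1 - C (c : ℂ) * X).prod = ∏ k, qString u (a k) (r k) ∧
        NonResonant u (fun k => (a k : ℂ)) r := by
  have hprod : (((Finset.univ.val.map (qSegment u ∘ fun k => (a k, r k))).bind
      (orbitSegment (· * (u ^ 2)⁻¹))).map fun c : ℂˣ => 1 - C (c : ℂ) * X).prod =
        ∏ k, qString u (a k) (r k) := by
    rw [Finset.prod_eq_multiset_prod, Multiset.map_bind, Multiset.prod_bind, Multiset.map_map]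
    simp only [qString_eq_prod_orbitSegment]
    rfl
  constructor
  · rintro ⟨hpos, hgp, rfl⟩
    have hmem (k) := Multiset.mem_map_of_mem (qSegment u ∘ fun k => (a k, r k)) (Finset.mem_univ k)
    exact ⟨fun k => hpos _ (hmem k), hprod,
      fun k j _ => (generalPosition_qSegment_iff u _ _ _ _).1 (hgp _ (hmem k) _ (hmem j))⟩
  · rintro ⟨hr, hf, hnr⟩
    refine ⟨Multiset.forall_mem_map_iff.2 fun k _ => hr k,
      Multiset.forall_mem_map_iff.2 fun k _ => Multiset.forall_mem_map_iff.2 fun j _ => ?_,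
      prod_one_sub_C_mul_X_injective (hprod.trans hf.symm)⟩
    by_cases hkj : k = j
    · exact hkj ▸ generalPosition_self (periodicPts_mul_inv_sq_eq_empty hu) _
    · exact (generalPosition_qSegment_iff u _ _ _ _).2 (hnr k j hkj)

end QString

/-- For `ξ` of infinite multiplicative order, every `f ∈ ℂ[u]` with `f(0) = 1` has a
`ξ`-factorization `f = ∏_k f_{a_k, r_k}` with nonzero `a_k`, `r_k ≥ 1`, satisfying the
non-resonance condition, and this factorization is unique up to permutation. -/
theorem stmt6 (ξ : ℂ) (hξ0 : ξ ≠ 0) (hinf : ∀ n : ℕ, 0 < n → ξ ^ n ≠ 1)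
    (f : Polynomial ℂ) (hf : f.eval 0 = 1) :
    ∃ (m : ℕ) (a : Fin m → ℂ) (r : Fin m → ℕ),
      (∀ k, a k ≠ 0) ∧ (∀ k, 1 ≤ r k) ∧ f = ∏ k, qString ξ (a k) (r k) ∧
      NonResonant ξ a r ∧
      ∀ (m' : ℕ) (a' : Fin m' → ℂ) (r' : Fin m' → ℕ),
        (∀ k, a' k ≠ 0) → (∀ k, 1 ≤ r' k) → f = ∏ k, qString ξ (a' k) (r' k) →
        NonResonant ξ a' r' →
        ∃ σ : Fin m' ≃ Fin m, (∀ k, a' k = a (σ k)) ∧ ∀ k, r' k = r (σ k) := by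
  lift ξ to ℂˣ using hξ0.isUnit with u
  have hu : ¬IsOfFinOrder u := fun h => by
    obtain ⟨n, hn, hun⟩ := isOfFinOrder_iff_pow_eq_one.1 (Units.isOfFinOrder_val.2 h)
    exact hinf n hn hun
  obtain ⟨M, rfl⟩ := exists_eq_prod_one_sub_C_mul_X hf
  obtain ⟨T, hT, hT_unique⟩ := existsUnique_isSegmentDecomposition (mul_left_injective _)
    (periodicPts_mul_inv_sq_eq_empty hu) M
  obtain ⟨m, g, rfl⟩ := Multiset.exists_fin_map_univ_eq (qSegment u) T
  obtain ⟨hr, hprod, hnr⟩ :=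
    (isSegmentDecomposition_qSegment_iff hu (fun k => (g k).1) (fun k => (g k).2) M).1 hT
  refine ⟨m, fun k => (g k).1, fun k => (g k).2, fun k => (g k).1.ne_zero, hr, hprod, hnr,
    fun m' a' r' ha' hr' hprod' hnr' => ?_⟩
  obtain ⟨σ, hσ⟩ := Fintype.exists_equiv_of_map_univ_eq (hT_unique _
    ((isSegmentDecomposition_qSegment_iff hu (fun k => Units.mk0 (a' k) (ha' k)) r' M).2
      ⟨hr', hprod', hnr'⟩))
  exact ⟨σ, fun k => congrArg (fun x => (x.1 : ℂ)) ((qSegment u).injective (hσ k)),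
    fun k => congrArg Prod.snd ((qSegment u).injective (hσ k))⟩
end

section
/- Fix l ∈ ℤ_{≥1} and let φ_l : ℂ[u] → ℂ[u] be the ℂ-algebra homomorphism with φ_l(u) = u^l. Then every polynomial f ∈ ℂ[u] with f(0) = 1 admits a unique factorization f = f' · φ_l(f'') where f', f'' ∈ ℂ[u] both have constant term 1 and f' is not divisible by 1 − a u^l for any a ∈ ℂ^×. -/
open Polynomial

/-! Write `φ_l = expand ℂ l`. Existence: peel off factors `1 - a u^l = φ_l(1 - a u)` while they
divide `f`; each lowers the degree by `l ≥ 1`. Uniqueness: if `g₁ φ_l(g₂) = h₁ φ_l(h₂)`, cancel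
`φ_l(gcd(g₂, h₂))`. The remaining cofactors `φ_l(g)`, `φ_l(h)` are coprime, so `φ_l(g) ∣ h₁`; a root
`r` of `g` would give the factor `φ_l(u - r) ∼ 1 - r⁻¹ u^l` of `h₁`, so `g` and likewise `h` are
constants, and the normalisation at `0` makes them equal. -/

namespace Polynomial

theorem natDegree_one_sub_C_mul_X_pow {R : Type*} [Ring R] [Nontrivial R] {l : ℕ} (hl : 0 < l)
    {a : R} (ha : a ≠ 0) : (1 - C a * X ^ l : R[X]).natDegree = l := by
  compute_degree!
  simp [hl.ne', ha]

theorem exists_mul_expand_of_eval_zero_eq_one {R : Type*} [CommRing R] [IsDomain R] {l : ℕ}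
    (hl : 0 < l) (f : R[X]) (hf : f.eval 0 = 1) :
    ∃ g₁ g₂ : R[X], g₁.eval 0 = 1 ∧ g₂.eval 0 = 1 ∧
      (∀ a : R, a ≠ 0 → ¬ (1 - C a * X ^ l ∣ g₁)) ∧ f = g₁ * expand R l g₂ := by
  induction hn : f.natDegree using Nat.strong_induction_on generalizing f with
  | _ n ih =>
  by_cases hfactor : ∃ a : R, a ≠ 0 ∧ 1 - C a * X ^ l ∣ f
  · obtain ⟨a, ha, g, rfl⟩ := hfactor
    have hg : g.eval 0 = 1 := by simpa [zero_pow hl.ne'] using hf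
    have hg0 : g ≠ 0 := by rintro rfl; simp at hg
    have hs0 : (1 - C a * X ^ l : R[X]) ≠ 0 :=
      ne_zero_of_natDegree_gt ((natDegree_one_sub_C_mul_X_pow hl ha).symm ▸ hl)
    have hdeg : g.natDegree < n := by
      rw [← hn, natDegree_mul hs0 hg0, natDegree_one_sub_C_mul_X_pow hl ha]
      omega
    obtain ⟨g₁, g₂, hg₁, hg₂, hfree, rfl⟩ := ih _ hdeg g hg rfl
    refine ⟨g₁, (1 - C a * X) * g₂, hg₁, by simp [hg₂], hfree, ?_⟩
    simp only [map_mul, map_sub, map_one, expand_C, expand_X]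
    ring
  · push Not at hfactor
    exact ⟨f, 1, hf, eval_one, hfactor, by simp⟩

section IsAlgClosed

variable {K : Type*} [Field K] [IsAlgClosed K] {l : ℕ}

theorem natDegree_eq_zero_of_expand_dvd {g h : K[X]} (hg : g.eval 0 ≠ 0)
    (hh : ∀ a : K, a ≠ 0 → ¬ (1 - C a * X ^ l ∣ h)) (hdvd : expand K l g ∣ h) :
    g.natDegree = 0 := by
  by_contra hdeg
  obtain ⟨r, hr⟩ := IsAlgClosed.exists_root g fun h => hdeg (natDegree_eq_of_degree_eq_some h)
  have hr0 : r ≠ 0 := by rintro rfl; exact hg hr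
  have hassoc : expand K l (X - C r) = C (-r) * (1 - C r⁻¹ * X ^ l) := by
    have hCr : C r * C r⁻¹ = (1 : K[X]) := by rw [← C_mul, mul_inv_cancel₀ hr0, C_1]
    simp only [map_sub, expand_X, expand_C, C_neg]
    linear_combination (-X ^ l : K[X]) * hCr
  have hroot : expand K l (X - C r) ∣ expand K l g := _root_.map_dvd _ (dvd_iff_isRoot.2 hr)
  refine hh r⁻¹ (inv_ne_zero hr0) (dvd_trans ?_ (hroot.trans hdvd))
  rw [hassoc]
  exact dvd_mul_left _ _

theorem eq_and_eq_of_mul_expand_eq_mul_expand (hl : 0 < l) {g₁ g₂ h₁ h₂ : K[X]}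
    (hg₂ : g₂.eval 0 = 1) (hh₂ : h₂.eval 0 = 1)
    (hg₁ : ∀ a : K, a ≠ 0 → ¬ (1 - C a * X ^ l ∣ g₁))
    (hh₁ : ∀ a : K, a ≠ 0 → ¬ (1 - C a * X ^ l ∣ h₁))
    (heq : g₁ * expand K l g₂ = h₁ * expand K l h₂) : g₁ = h₁ ∧ g₂ = h₂ := by
  classical
  obtain ⟨g, h, hg, hh, hunit⟩ := extract_gcd g₂ h₂
  set d := gcd g₂ h₂
  have hdg : d.eval 0 * g.eval 0 = 1 := by rw [← eval_mul, ← hg, hg₂]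
  have hdh : d.eval 0 * h.eval 0 = 1 := by rw [← eval_mul, ← hh, hh₂]
  have hd : expand K l d ≠ 0 := (expand_ne_zero hl).2 fun hd0 => by simp [hd0] at hdg
  have hcancel : g₁ * expand K l g = h₁ * expand K l h := by
    refine mul_left_cancel₀ hd ?_
    rw [hg, hh, map_mul, map_mul] at heq
    linear_combination heq
  have hcop : IsCoprime (expand K l g) (expand K l h) :=
    ((gcd_isUnit_iff _ _).1 hunit).map (expand K l).toRingHom
  have hg0 : g.natDegree = 0 := natDegree_eq_zero_of_expand_dvd (right_ne_zero_of_mul_eq_one hdg)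
    hh₁ (hcop.dvd_of_dvd_mul_right (Dvd.intro_left _ hcancel))
  have hh0 : h.natDegree = 0 := natDegree_eq_zero_of_expand_dvd (right_ne_zero_of_mul_eq_one hdh)
    hg₁ (hcop.symm.dvd_of_dvd_mul_right (Dvd.intro_left _ hcancel.symm))
  have hgh : g = h := by
    rw [eq_C_of_natDegree_eq_zero hg0, eq_C_of_natDegree_eq_zero hh0, coeff_zero_eq_eval_zero,
      coeff_zero_eq_eval_zero, mul_left_cancel₀ (left_ne_zero_of_mul_eq_one hdg) (hdg.trans hdh.symm)]
  have h₂eq : g₂ = h₂ := by rw [hg, hh, hgh]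
  subst h₂eq
  have hg₂0 : expand K l g₂ ≠ 0 := (expand_ne_zero hl).2 fun h0 => by simp [h0] at hg₂
  exact ⟨mul_right_cancel₀ hg₂0 heq, rfl⟩

end IsAlgClosed

end Polynomial

/-- Fix `l ≥ 1` and let `φ_l : ℂ[u] → ℂ[u]` be the substitution `u ↦ u^l` (so
`φ_l(g) = g.comp (X^l)`). Every `f ∈ ℂ[u]` with `f(0) = 1` factors uniquely as
`f = f' · φ_l(f'')` where `f'` and `f''` have constant term `1` and `f'` is not
divisible by `1 - a u^l` for any `a ∈ ℂ^×`. -/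
theorem stmt7 (l : ℕ) (hl : 1 ≤ l) (f : Polynomial ℂ) (hf : f.eval 0 = 1) :
    ∃! p : Polynomial ℂ × Polynomial ℂ,
      p.1.eval 0 = 1 ∧ p.2.eval 0 = 1 ∧
      (∀ a : ℂ, a ≠ 0 → ¬ (1 - C a * X ^ l ∣ p.1)) ∧
      f = p.1 * p.2.comp (X ^ l) := by
  obtain ⟨g₁, g₂, hg₁, hg₂, hfree, rfl⟩ := exists_mul_expand_of_eval_zero_eq_one hl f hf
  refine ⟨(g₁, g₂), ⟨hg₁, hg₂, hfree, rfl⟩, ?_⟩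
  rintro ⟨h₁, h₂⟩ ⟨-, hh₂, hh₁, heq⟩
  obtain ⟨rfl, rfl⟩ := eq_and_eq_of_mul_expand_eq_mul_expand hl hh₂ hg₂ hh₁ hfree heq.symm
  rfl
end

section
/- Let ξ ∈ ℂ^× be of infinite multiplicative order and a_1, …, a_m ∈ ℂ^×. Then there exists a permutation σ of {1, …, m} such that a_{σ(j)} / a_{σ(k)} ≠ ξ^{−2} for all 1 ≤ j < k ≤ m. -/
/-!
Sort the `a_i` along the relation `a_j = ξ⁻² a_i`. A chain of length `n ≥ 1` of this relation
gives `a_j = ξ^{-2n} a_i`, so it has no cycles when `ξ` has infinite order; on a finite index set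
it is then well founded, and listing the indices by increasing rank yields the permutation.
-/

open Relation

theorem exists_pow_mul_eq_of_transGen {M ι : Type*} [Monoid M] {a : ι → M} {c : M} {i j : ι}
    (h : TransGen (fun i j => a j = c * a i) i j) : ∃ n, 0 < n ∧ a j = c ^ n * a i := by
  induction h with
  | single h => exact ⟨1, one_pos, by rwa [pow_one]⟩
  | tail _ h ih =>
    obtain ⟨n, -, hn⟩ := ih
    exact ⟨n + 1, n.succ_pos, by rw [h, hn, pow_succ', mul_assoc]⟩

theorem not_transGen_self_of_pow_ne_one {M ι : Type*} [MonoidWithZero M] [IsRightCancelMulZero M]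
    {a : ι → M} {c : M} (ha : ∀ i, a i ≠ 0) (hc : ∀ n, 0 < n → c ^ n ≠ 1) (i : ι) :
    ¬ TransGen (fun i j => a j = c * a i) i i := fun h => by
  obtain ⟨n, hn, hcycle⟩ := exists_pow_mul_eq_of_transGen h
  exact hc n hn (mul_right_cancel₀ (ha i) (by rw [one_mul, ← hcycle])).symm

theorem Fin.exists_perm_forall_lt_not_rel {n : ℕ} {r : Fin n → Fin n → Prop}
    (hr : ∀ i, ¬ TransGen r i i) : ∃ σ : Equiv.Perm (Fin n), ∀ j k, j < k → ¬ r (σ k) (σ j) := by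
  have : Std.Irrefl (TransGen r) := ⟨hr⟩
  have : IsWellFounded (Fin n) (TransGen r) := ⟨Finite.wellFounded_of_trans_of_irrefl _⟩
  let rank := IsWellFounded.rank (TransGen r)
  refine ⟨Tuple.sort rank, fun j k hjk hkj => ?_⟩
  exact (IsWellFounded.rank_lt_of_rel (.single hkj)).not_ge (Tuple.monotone_sort rank hjk.le)

theorem stmt9_general (ξ : ℂ) (hinf : ∀ n : ℕ, 0 < n → ξ ^ n ≠ 1)
    (m : ℕ) (a : Fin m → ℂ) (ha : ∀ j, a j ≠ 0) :
    ∃ σ : Equiv.Perm (Fin m), ∀ j k : Fin m, j < k → a (σ j) / a (σ k) ≠ ξ ^ (-2 : ℤ) := by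
  have hξ : ∀ n, 0 < n → (ξ ^ (-2 : ℤ)) ^ n ≠ 1 := fun n hn h => by
    refine hinf (2 * n) (by omega) ?_
    rwa [← zpow_natCast, ← zpow_mul, neg_mul, zpow_neg, inv_eq_one, ← Nat.cast_ofNat,
      ← Nat.cast_mul, zpow_natCast] at h
  obtain ⟨σ, hσ⟩ := Fin.exists_perm_forall_lt_not_rel (not_transGen_self_of_pow_ne_one ha hξ)
  exact ⟨σ, fun j k hjk h => hσ j k hjk (show a (σ j) = _ from (div_eq_iff (ha _)).mp h)⟩

/-- If `ξ ∈ ℂ^×` has infinite multiplicative order and `a_1, …, a_m ∈ ℂ^×`, then there is a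
permutation `σ` of `{1,…,m}` such that `a_{σ(j)} / a_{σ(k)} ≠ ξ^{-2}` for all `j < k`. -/
theorem stmt9 (ξ : ℂ) (hξ0 : ξ ≠ 0) (hinf : ∀ n : ℕ, 0 < n → ξ ^ n ≠ 1)
    (m : ℕ) (a : Fin m → ℂ) (ha : ∀ j, a j ≠ 0) :
    ∃ σ : Equiv.Perm (Fin m), ∀ j k : Fin m, j < k → a (σ j) / a (σ k) ≠ ξ ^ (-2 : ℤ) :=
  stmt9_general ξ hinf m a ha
end

section
/- Let l ≥ 3 be an odd integer, ζ ∈ ℂ a primitive l-th root of unity, and a_1, …, a_m ∈ ℂ^×. Then there exists a permutation σ of {1, …, m} such that a_{σ(j)} / a_{σ(k)} ≠ ζ^{−2} for all j < k if and only if there is no b ∈ ℂ^× such that each of the numbers b, bζ, bζ², …, bζ^{l−1} occurs among a_1, …, a_m (with multiplicity; i.e., iff the polynomial ∏_{j=1}^m (1 − a_j u) is not divisible by 1 − b^l u^l for any b ∈ ℂ^×). -/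
/-!
Write `r x y` for `a y / a x = ζ⁻²`, i.e. `a x = ζ² a y`, meaning that `x` has to be placed
before `y`. Since `ζ² ≠ 1` no index is related to itself, so a valid ordering exists iff `r` is
well founded: sort by the rank of `r`. An infinite descending `r`-chain is a sequence of values
`b, ζ² b, ζ⁴ b, …` among the `a_j`; as `l` is odd, `ζ²` generates all `l`-th roots of unity, so
such chains exist iff some coset `b μ_l` lies among the `a_j`. Because
`1 - b^l u^l = ∏_{ξ ∈ μ_l} (1 - b ξ u)` has distinct linear factors, that is exactly
divisibility of `∏_j (1 - a_j u)` by `1 - b^l u^l`.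
-/

open Polynomial

theorem exists_perm_forall_lt_not_rel_iff_wellFounded {m : ℕ} {r : Fin m → Fin m → Prop}
    (hr : ∀ i, ¬ r i i) :
    (∃ σ : Equiv.Perm (Fin m), ∀ j k, j < k → ¬ r (σ k) (σ j)) ↔ WellFounded r := by
  constructor
  · rintro ⟨σ, hσ⟩
    refine Subrelation.wf (fun {x y} hxy => ?_) (InvImage.wf σ.symm wellFounded_lt)
    have hne : σ.symm x ≠ σ.symm y := fun h => hr x (σ.symm.injective h ▸ hxy)
    exact lt_of_le_of_ne (not_lt.1 fun hlt => hσ _ _ hlt (by simpa using hxy)) hne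
  · intro hwf
    have : IsWellFounded _ r := ⟨hwf⟩
    exact ⟨Tuple.sort (IsWellFounded.rank r), fun j k hjk hrel =>
      (IsWellFounded.rank_lt_of_rel hrel).not_ge
        (Tuple.monotone_sort (IsWellFounded.rank r) hjk.le)⟩

theorem exists_seq_eq_mul_iff {K ι : Type*} [Field K] {g : K} {l : ℕ} [NeZero l]
    (hg : IsPrimitiveRoot g l) {a : ι → K} (ha : ∀ j, a j ≠ 0) :
    (∃ p : ℕ → ι, ∀ n, a (p (n + 1)) = g * a (p n)) ↔
      ∃ b ≠ 0, ∀ ξ : K, ξ ^ l = 1 → ∃ j, a j = b * ξ := by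
  constructor
  · rintro ⟨p, hp⟩
    have hpow : ∀ n, a (p n) = a (p 0) * g ^ n := by
      intro n
      induction n with
      | zero => simp
      | succ n ih => rw [hp, ih, pow_succ]; ring
    refine ⟨a (p 0), ha _, fun ξ hξ => ?_⟩
    obtain ⟨n, -, rfl⟩ := hg.eq_pow_of_pow_eq_one hξ
    exact ⟨p n, hpow n⟩
  · rintro ⟨b, -, hb⟩
    have : Nonempty ι := ⟨(hb 1 (one_pow l)).choose⟩
    choose! q hq using hb
    have hg_pow : ∀ n, (g ^ n) ^ l = 1 := fun n => by
      rw [← pow_mul, mul_comm, pow_mul, hg.pow_eq_one, one_pow]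
    refine ⟨fun n => q (g ^ n), fun n => ?_⟩
    rw [hq _ (hg_pow _), hq _ (hg_pow _), pow_succ]
    ring

theorem one_sub_C_pow_mul_X_pow_eq_prod {R : Type*} [CommRing R] [IsDomain R] [Infinite R]
    {ζ : R} {l : ℕ} [NeZero l] (hζ : IsPrimitiveRoot ζ l) (b : R) :
    (1 - C (b ^ l) * X ^ l : R[X]) = ∏ ξ ∈ nthRootsFinset l (1 : R), (1 - C (b * ξ) * X) := by
  refine Polynomial.funext fun t => ?_
  simp only [eval_sub, eval_one, eval_mul, eval_C, eval_pow, eval_X, eval_prod]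
  simpa [mul_pow, mul_comm, mul_left_comm] using
    hζ.pow_sub_pow_eq_prod_sub_mul 1 (b * t) (NeZero.pos l)

theorem one_sub_C_pow_mul_X_pow_dvd_prod_iff {K ι : Type*} [Field K] [Infinite K] [Fintype ι]
    {ζ : K} {l : ℕ} [NeZero l] (hζ : IsPrimitiveRoot ζ l) (a : ι → K) {b : K} (hb : b ≠ 0) :
    (1 - C (b ^ l) * X ^ l) ∣ ∏ j, (1 - C (a j) * X) ↔
      ∀ ξ : K, ξ ^ l = 1 → ∃ j, a j = b * ξ := by
  classical
  have hroots : ∀ ξ, ξ ∈ nthRootsFinset l (1 : K) ↔ ξ ^ l = 1 :=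
    fun ξ => mem_nthRootsFinset (NeZero.pos l) 1
  rw [one_sub_C_pow_mul_X_pow_eq_prod hζ]
  constructor
  · intro hdvd ξ hξ
    have hbξ : b * ξ ≠ 0 := mul_ne_zero hb (left_ne_zero_of_mul_eq_one
      (by rw [← pow_succ', Nat.sub_add_cancel (NeZero.pos l), hξ]) : ξ ≠ 0)
    have hfactor : IsRoot (1 - C (b * ξ) * X) (b * ξ)⁻¹ := by
      simp only [IsRoot.def, eval_sub, eval_one, eval_mul, eval_C, eval_X,
        mul_inv_cancel₀ hbξ, sub_self]
    have hfactor_dvd : 1 - C (b * ξ) * X ∣ ∏ j, (1 - C (a j) * X) :=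
      (Finset.dvd_prod_of_mem (fun η => 1 - C (b * η) * X) ((hroots ξ).2 hξ)).trans hdvd
    have hprod := hfactor.dvd hfactor_dvd
    rw [IsRoot.def, eval_prod] at hprod
    obtain ⟨j, -, hj⟩ := Finset.prod_eq_zero_iff.1 hprod
    simp only [eval_sub, eval_one, eval_mul, eval_C, eval_X] at hj
    rw [sub_eq_zero, eq_comm, ← div_eq_mul_inv, div_eq_one_iff_eq hbξ] at hj
    exact ⟨j, hj⟩
  · intro hb
    have : Nonempty ι := ⟨(hb 1 (one_pow l)).choose⟩
    choose! q hq using hb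
    have hq_inj : Set.InjOn q (nthRootsFinset l (1 : K)) := fun ξ hξ η hη h =>
      mul_left_cancel₀ hb <| by rw [← hq ξ ((hroots ξ).1 hξ), ← hq η ((hroots η).1 hη), h]
    calc ∏ ξ ∈ nthRootsFinset l (1 : K), (1 - C (b * ξ) * X)
        = ∏ ξ ∈ nthRootsFinset l (1 : K), (1 - C (a (q ξ)) * X) :=
          Finset.prod_congr rfl fun ξ hξ => by rw [hq ξ ((hroots ξ).1 hξ)]
      _ = ∏ j ∈ (nthRootsFinset l (1 : K)).image q, (1 - C (a j) * X) :=
          (Finset.prod_image (f := fun j => 1 - C (a j) * X) hq_inj).symm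
      _ ∣ ∏ j, (1 - C (a j) * X) :=
          Finset.prod_dvd_prod_of_subset _ _ _ (Finset.subset_univ _)

/-- Let `l ≥ 3` be odd, `ζ` a primitive `l`-th root of unity, and `a_1,…,a_m ∈ ℂ^×`.
There is a permutation `σ` with `a_{σ(j)}/a_{σ(k)} ≠ ζ^{-2}` for all `j < k` if and only if
the polynomial `∏_j (1 - a_j u)` is not divisible by `1 - b^l u^l` for any `b ∈ ℂ^×`. -/
theorem stmt10 (l : ℕ) (hl3 : 3 ≤ l) (hodd : Odd l) (ζ : ℂ) (hζ : IsPrimitiveRoot ζ l)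
    (m : ℕ) (a : Fin m → ℂ) (ha : ∀ j, a j ≠ 0) :
    (∃ σ : Equiv.Perm (Fin m), ∀ j k : Fin m, j < k → a (σ j) / a (σ k) ≠ ζ ^ (-2 : ℤ)) ↔
      ¬ ∃ b : ℂ, b ≠ 0 ∧ (1 - C (b ^ l) * X ^ l) ∣ ∏ j, (1 - C (a j) * X) := by
  have : NeZero l := ⟨by omega⟩
  have hζ2 : IsPrimitiveRoot (ζ ^ 2) l := hζ.pow_of_coprime 2 (Nat.coprime_two_left.2 hodd)
  have hrel : ∀ x y, a y / a x = ζ ^ (-2 : ℤ) ↔ a x = ζ ^ 2 * a y := fun x y => by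
    rw [div_eq_iff (ha x), zpow_neg, zpow_ofNat, eq_comm,
      inv_mul_eq_iff_eq_mul₀ (pow_ne_zero 2 (hζ.ne_zero (NeZero.ne l)))]
  have hirrefl : ∀ x, ¬ a x / a x = ζ ^ (-2 : ℤ) := fun x h =>
    hζ2.ne_one (by omega) (mul_eq_right₀ (ha x) |>.1 ((hrel x x).1 h).symm)
  calc _ ↔ WellFounded fun x y => a y / a x = ζ ^ (-2 : ℤ) :=
        exists_perm_forall_lt_not_rel_iff_wellFounded hirrefl
    _ ↔ ¬ ∃ p : ℕ → Fin m, ∀ n, a (p (n + 1)) = ζ ^ 2 * a (p n) := by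
        simp only [wellFounded_iff_isEmpty_descending_chain, isEmpty_subtype, hrel, not_exists]
    _ ↔ ¬ ∃ b ≠ 0, ∀ ξ : ℂ, ξ ^ l = 1 → ∃ j, a j = b * ξ :=
        not_congr (exists_seq_eq_mul_iff hζ2 ha)
    _ ↔ _ := not_congr <| exists_congr fun b => and_congr_right fun hb =>
        (one_sub_C_pow_mul_X_pow_dvd_prod_iff hζ a hb).symm
end
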